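/- arXiv:2407.00907 — 3 statements merged into one kernel-verified Lean document; each statement's English description precedes it below -/
import Mathlib

section
/- Let H be a real inner product space, β, σ > 0, and let sequences r_b^{(m)}, r_n^{(m)}, λ_b^{(m)}, λ_n^{(m)} in H satisfy r_b^{(m)} = 2β λ_b^{(m)} - r_b^{(m-1)} and r_n^{(m)} = 2σ λ_n^{(m)} - r_n^{(m-1)}, together with the balance relation ⟨βλ_b^{(m)} - r_b^{(m-1)}, λ_b^{(m)}⟩ + ⟨σλ_n^{(m)} - r_n^{(m-1)}, λ_n^{(m)}⟩ = -S_m with S_m ≥ 0. Then the quantity E_m = β^{-1}‖r_b^{(m)}‖² + σ^{-1}‖r_n^{(m)}‖² satisfies E_m = E_{m-1} - 4 S_m; in particular E_m is nonincreasing, bounded, and ∑_m S_m < ∞, so S_m → 0. -/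
open RealInnerProductSpace Filter

lemma sq_expand {H : Type*} [NormedAddCommGroup H] [InnerProductSpace ℝ H]
    (c : ℝ) (l r : H) :
    ‖(2 * c) • l - r‖ ^ 2
      = 4 * c ^ 2 * ⟪l, l⟫ - 4 * c * ⟪r, l⟫ + ⟪r, r⟫ := by
  rw [← real_inner_self_eq_norm_sq]
  simp only [inner_sub_left, inner_sub_right, real_inner_smul_left, real_inner_smul_right,
    real_inner_comm l r]
  ring

/-- Energy identity and its consequences for the parallel iterative PDWG procedure. -/
theorem stmt_2 {H : Type*} [NormedAddCommGroup H] [InnerProductSpace ℝ H]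
    (β σ : ℝ) (hβ : 0 < β) (hσ : 0 < σ)
    (rb rn lb ln : ℕ → H) (S : ℕ → ℝ)
    (hrb : ∀ m : ℕ, rb (m + 1) = (2 * β) • lb (m + 1) - rb m)
    (hrn : ∀ m : ℕ, rn (m + 1) = (2 * σ) • ln (m + 1) - rn m)
    (hbal : ∀ m : ℕ,
      ⟪β • lb (m + 1) - rb m, lb (m + 1)⟫ + ⟪σ • ln (m + 1) - rn m, ln (m + 1)⟫
        = - S (m + 1))
    (hS : ∀ m : ℕ, 0 ≤ S m)
    (E : ℕ → ℝ)
    (hE : ∀ m : ℕ, E m = β⁻¹ * ‖rb m‖ ^ 2 + σ⁻¹ * ‖rn m‖ ^ 2) :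
    (∀ m : ℕ, E (m + 1) = E m - 4 * S (m + 1)) ∧
    (∀ m n : ℕ, m ≤ n → E n ≤ E m) ∧
    (∀ m : ℕ, E m ≤ E 0) ∧
    Summable S ∧
    Tendsto S atTop (nhds 0) := by
  have key : ∀ m : ℕ, E (m + 1) = E m - 4 * S (m + 1) := by
    intro m
    have h1 := hbal m
    rw [inner_sub_left, inner_sub_left, real_inner_smul_left, real_inner_smul_left] at h1
    rw [hE, hE, hrb, hrn, sq_expand, sq_expand,
      ← real_inner_self_eq_norm_sq (rb m), ← real_inner_self_eq_norm_sq (rn m)]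
    have hb := hβ.ne'
    have hs := hσ.ne'
    field_simp
    nlinarith [h1, mul_pos hβ hσ]
  have hEmono : ∀ m n : ℕ, m ≤ n → E n ≤ E m := by
    intro m n hmn
    induction n with
    | zero => simp_all
    | succ k ih =>
      rcases Nat.lt_or_ge m (k + 1) with h | h
      · have := ih (Nat.lt_succ_iff.mp h)
        have h4 : 0 ≤ 4 * S (k + 1) := by nlinarith [hS (k + 1)]
        rw [key k]; linarith
      · have : m = k + 1 := le_antisymm hmn h
        simp [this]
  have hEnn : ∀ m : ℕ, 0 ≤ E m := by
    intro m
    rw [hE]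
    have h1 : (0:ℝ) ≤ β⁻¹ := inv_nonneg.mpr hβ.le
    have h2 : (0:ℝ) ≤ σ⁻¹ := inv_nonneg.mpr hσ.le
    nlinarith [sq_nonneg ‖rb m‖, sq_nonneg ‖rn m‖, mul_nonneg h1 (sq_nonneg ‖rb m‖), mul_nonneg h2 (sq_nonneg ‖rn m‖)]
  have hsum : Summable S := by
    apply summable_of_sum_range_le hS (c := S 0 + E 0 / 4)
    intro n
    cases n with
    | zero => simp; nlinarith [hEnn 0, hS 0]
    | succ k =>
      rw [Finset.sum_range_succ']
      have h4 : 4 * ∑ i ∈ Finset.range k, S (i + 1) = E 0 - E k := by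
        induction k with
        | zero => simp
        | succ j ih =>
          rw [Finset.sum_range_succ, key j]
          linarith
      have := hEnn k
      nlinarith
  refine ⟨key, hEmono, fun m => hEmono 0 m (Nat.zero_le m), hsum, hsum.tendsto_atTop_zero⟩
end

section
/- Let T ⊂ ℝ^d be a bounded Lipschitz domain, and let w ∈ H²(T). Let P be a finite-dimensional subspace of L²(T) (piecewise polynomials of degree ≤ k-1), Q₀ the L²-orthogonal projection onto polynomials of degree ≤ k on T, Q_b the L² projection onto degree k-1 polynomials on each boundary edge/face of T, and 𝒬 the L² projection onto P. Define the discrete weak Laplacian Δ_w(Q_h w) ∈ P by (Δ_w(Q_h w), φ)_T = (Q₀w, Δφ)_T − ⟨Q_b w, ∇φ·n⟩_{∂T} + ⟨Q_b(∇w·n), φ⟩_{∂T} for all φ ∈ P. Then Δ_w(Q_h w) = 𝒬(Δw), i.e., the discrete weak Laplacian of the projected function equals the projection of the Laplacian. -/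
open RealInnerProductSpace

namespace Submodule

variable {𝕜 E : Type*} [RCLike 𝕜] [NormedAddCommGroup E] [InnerProductSpace 𝕜 E]
  (K : Submodule 𝕜 E) [K.HasOrthogonalProjection]

theorem eq_orthogonalProjectionOnto_of_forall_inner_eq {u : E} (v : K)
    (h : ∀ w : K, inner 𝕜 (v : E) (w : E) = inner 𝕜 u (w : E)) :
    v = K.orthogonalProjectionOnto u := by
  refine Subtype.ext (K.eq_starProjection_of_mem_of_inner_eq_zero v.2 fun w hw => ?_).symm
  rw [inner_sub_left, h ⟨w, hw⟩, sub_self]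

theorem inner_orthogonalProjectionOnto_left_of_mem (u : E) {v : E} (hv : v ∈ K) :
    inner 𝕜 (K.orthogonalProjectionOnto u : E) v = inner 𝕜 u v :=
  K.inner_orthogonalProjectionOnto_eq_of_mem_right ⟨v, hv⟩ u

end Submodule

/-- Commuting property of the discrete weak Laplacian with L² projections:
`Δ_w (Q_h w) = 𝒬 (Δ w)`.  Here `X` plays the role of `L²(T)`, `Y` of `L²(∂T)`,
`P = P_{k-1}(T)` is the test polynomial space, `Pk = P_k(T)`, `B` the boundary
polynomial space; `Δp φ`, `gn φ`, `tr φ` denote `Δφ`, `∇φ·n` and the trace of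
`φ ∈ P`; `wb`, `wn` are the traces of `w` and `∇w·n`, and `Δw` its Laplacian,
related by Green's identity. -/
theorem stmt_3 {X Y : Type*}
    [NormedAddCommGroup X] [InnerProductSpace ℝ X]
    [NormedAddCommGroup Y] [InnerProductSpace ℝ Y]
    (P Pk : Submodule ℝ X) (B : Submodule ℝ Y)
    [FiniteDimensional ℝ P] [FiniteDimensional ℝ Pk] [FiniteDimensional ℝ B]
    (Δp : P →ₗ[ℝ] X) (gn tr : P →ₗ[ℝ] Y)
    (hΔp : ∀ φ : P, Δp φ ∈ Pk)
    (hgn : ∀ φ : P, gn φ ∈ B)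
    (htr : ∀ φ : P, tr φ ∈ B)
    (w Δw : X) (wb wn : Y)
    (hGreen : ∀ φ : P, ⟪w, Δp φ⟫ - ⟪wb, gn φ⟫ + ⟪wn, tr φ⟫ = ⟪Δw, (φ : X)⟫)
    (d : P)
    (hd : ∀ φ : P, ⟪(d : X), (φ : X)⟫ =
      ⟪((Submodule.orthogonalProjectionOnto Pk w : Pk) : X), Δp φ⟫
        - ⟪((Submodule.orthogonalProjectionOnto B wb : B) : Y), gn φ⟫
        + ⟪((Submodule.orthogonalProjectionOnto B wn : B) : Y), tr φ⟫) :
    d = Submodule.orthogonalProjectionOnto P Δw := by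
  refine P.eq_orthogonalProjectionOnto_of_forall_inner_eq d fun φ => ?_
  -- each projection may be dropped because it is tested against an element of its range
  rw [hd, ← hGreen, Pk.inner_orthogonalProjectionOnto_left_of_mem w (hΔp φ),
    B.inner_orthogonalProjectionOnto_left_of_mem wb (hgn φ),
    B.inner_orthogonalProjectionOnto_left_of_mem wn (htr φ)]
end

section
/- Let H be a real Hilbert space and β > 0. Define the iteration map on pairs: given (r^{(m-1)}, known data), each step produces λ^{(m)} ∈ H and sets r^{(m)} = 2βλ^{(m)} − r^{(m-1)}. Suppose along the iteration ⟨βλ^{(m)} − r^{(m-1)}, λ^{(m)}⟩ = −S_m with S_m ≥ 0 for all m, and r^{(0)} is given. Then for all m, β^{-1}‖r^{(m)}‖² = β^{-1}‖r^{(0)}‖² − 4∑_{i=1}^{m} S_i; consequently, if S_m ≥ c·‖λ^{(m)}‖² for some c > 0, then λ^{(m)} → 0 in H as m → ∞. -/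
/-!
The update `r ↦ 2βλ - r` changes `‖r‖²` by exactly `4β⟪βλ - r, λ⟫ = -4β S`, so `β⁻¹‖r‖²`
telescopes. Since it stays nonnegative, the partial sums of the nonnegative `S_m` are bounded,
hence `∑ S_m` converges, `S_m → 0`, and coercivity forces `‖λ_m‖ → 0`.
-/

open RealInnerProductSpace Filter Topology

theorem norm_two_mul_smul_sub_sq {H : Type*} [NormedAddCommGroup H] [InnerProductSpace ℝ H]
    (β : ℝ) (x y : H) :
    ‖(2 * β) • x - y‖ ^ 2 = ‖y‖ ^ 2 + 4 * β * ⟪β • x - y, x⟫ := by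
  rw [norm_sub_sq_real, norm_smul, mul_pow, Real.norm_eq_abs, sq_abs, inner_sub_left,
    real_inner_smul_left, real_inner_smul_left, real_inner_self_eq_norm_sq, real_inner_comm]
  ring

theorem tendsto_zero_of_coercive_of_summable {E : Type*} [SeminormedAddCommGroup E]
    {x : ℕ → E} {s : ℕ → ℝ} (hs : Summable s) {c : ℝ} (hc : 0 < c)
    (hcoer : ∀ m, c * ‖x m‖ ^ 2 ≤ s m) : Tendsto x atTop (𝓝 0) := by
  have hsq : Tendsto (fun m => ‖x m‖ ^ 2) atTop (𝓝 0) := by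
    refine squeeze_zero (fun m => sq_nonneg _) (fun m => ?_)
      (by simpa using hs.tendsto_atTop_zero.div_const c)
    rw [le_div_iff₀ hc, mul_comm]
    exact hcoer m
  rw [tendsto_zero_iff_norm_tendsto_zero]
  simpa using hsq.sqrt

theorem stmt_10_general {H : Type*} [NormedAddCommGroup H] [InnerProductSpace ℝ H]
    (β : ℝ) (hβ : 0 < β)
    (lam r : ℕ → H) (S : ℕ → ℝ)
    (hr : ∀ m : ℕ, r (m + 1) = (2 * β) • lam (m + 1) - r m)
    (hbal : ∀ m : ℕ, ⟪β • lam (m + 1) - r m, lam (m + 1)⟫ = - S (m + 1))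
    (hS : ∀ m : ℕ, 0 ≤ S (m + 1)) :
    (∀ m : ℕ, β⁻¹ * ‖r m‖ ^ 2
        = β⁻¹ * ‖r 0‖ ^ 2 - 4 * ∑ i ∈ Finset.range m, S (i + 1)) ∧
    (∀ c : ℝ, 0 < c → (∀ m : ℕ, c * ‖lam (m + 1)‖ ^ 2 ≤ S (m + 1)) →
      Tendsto lam atTop (nhds 0)) := by
  have step (m : ℕ) : β⁻¹ * ‖r m‖ ^ 2 - β⁻¹ * ‖r (m + 1)‖ ^ 2 = 4 * S (m + 1) := by
    rw [hr, norm_two_mul_smul_sub_sq, hbal]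
    field_simp
    ring
  have energy (m : ℕ) : β⁻¹ * ‖r m‖ ^ 2
      = β⁻¹ * ‖r 0‖ ^ 2 - 4 * ∑ i ∈ Finset.range m, S (i + 1) := by
    rw [Finset.mul_sum, ← Finset.sum_congr rfl fun i _ => step i, Finset.sum_range_sub']
    ring
  refine ⟨energy, fun c hc hcoer => ?_⟩
  have hbound (m : ℕ) : ∑ i ∈ Finset.range m, S (i + 1) ≤ β⁻¹ * ‖r 0‖ ^ 2 / 4 := by
    have := energy m
    have : 0 ≤ β⁻¹ * ‖r m‖ ^ 2 := by positivity
    linarith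
  have hlim := tendsto_zero_of_coercive_of_summable (summable_of_sum_range_le hS hbound) hc hcoer
  exact (tendsto_add_atTop_iff_nat 1).mp hlim

/-- Energy identity for the domain-decomposition iteration and convergence of
the dual-variable iterates under a coercivity assumption on the stabilizer
energy. -/
theorem stmt_10 {H : Type*} [NormedAddCommGroup H] [InnerProductSpace ℝ H]
    [CompleteSpace H]
    (β : ℝ) (hβ : 0 < β)
    (lam r : ℕ → H) (S : ℕ → ℝ)
    (hr : ∀ m : ℕ, r (m + 1) = (2 * β) • lam (m + 1) - r m)
    (hbal : ∀ m : ℕ, ⟪β • lam (m + 1) - r m, lam (m + 1)⟫ = - S (m + 1))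
    (hS : ∀ m : ℕ, 0 ≤ S (m + 1)) :
    (∀ m : ℕ, β⁻¹ * ‖r m‖ ^ 2
        = β⁻¹ * ‖r 0‖ ^ 2 - 4 * ∑ i ∈ Finset.range m, S (i + 1)) ∧
    (∀ c : ℝ, 0 < c → (∀ m : ℕ, c * ‖lam (m + 1)‖ ^ 2 ≤ S (m + 1)) →
      Tendsto lam atTop (nhds 0)) :=
  stmt_10_general β hβ lam r S hr hbal hS
end
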